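/- arXiv:1506.02695 — 7 statements merged into one kernel-verified Lean document; each statement's English description precedes it below -/
import Mathlib

section
/- Let G be a finite group and X a generating set of G with 1 ∉ X. Then the diameter of G with respect to X (the maximum over g ∈ G of the minimal length of a word in X representing g) is at most |G| − |X|. -/
open Subgroup

/-- Minimal length of a word over `X` (positive letters only) representing `g`. -/
noncomputable def wLen {G : Type*} [Group G] (X : Set G) (g : G) : ℕ :=
  sInf {n | ∃ l : List G, (∀ x ∈ l, x ∈ X) ∧ l.length = n ∧ l.prod = g}

/-- Minimal length of a word over `X ∪ X⁻¹` representing `g`. -/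
noncomputable def sLen {G : Type*} [Group G] (X : Set G) (g : G) : ℕ :=
  sInf {n | ∃ l : List G, (∀ x ∈ l, x ∈ X ∨ x⁻¹ ∈ X) ∧ l.length = n ∧ l.prod = g}

/-- Diameter of `G` with respect to `X` (positive words). -/
noncomputable def diamW (G : Type*) [Group G] (X : Set G) : ℕ :=
  sSup (Set.range (wLen X))

/-- Symmetric diameter of `G` with respect to `X`. -/
noncomputable def diamS (G : Type*) [Group G] (X : Set G) : ℕ :=
  sSup (Set.range (sLen X))

/-- Maximum diameter over all generating sets. -/
noncomputable def DW (G : Type*) [Group G] : ℕ :=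
  sSup {d | ∃ X : Set G, Subgroup.closure X = ⊤ ∧ d = diamW G X}

/-- Maximum symmetric diameter over all generating sets. -/
noncomputable def DS (G : Type*) [Group G] : ℕ :=
  sSup {d | ∃ X : Set G, Subgroup.closure X = ⊤ ∧ d = diamS G X}

/-- Minimal size of a generating set of `G`. -/
noncomputable def rk (G : Type*) [Group G] : ℕ :=
  sInf {n | ∃ S : Finset G, S.card = n ∧ Subgroup.closure (S : Set G) = ⊤}

-- aux
set_option linter.unusedSectionVars false

section Aux
variable {G : Type*} [Group G] [Fintype G] (X : Set G)

/-- Ball of radius `k`. -/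
def ball (k : ℕ) : Set G := {g | ∃ l : List G, (∀ x ∈ l, x ∈ X) ∧ l.length ≤ k ∧ l.prod = g}

lemma ball_mono {X : Set G} {j k : ℕ} (h : j ≤ k) : ball X j ⊆ ball X k := by
  rintro g ⟨l, hl, hlen, hprod⟩
  exact ⟨l, hl, hlen.trans h, hprod⟩

lemma one_mem_ball (k : ℕ) : (1 : G) ∈ ball X k :=
  ⟨[], by simp, by simp, by simp⟩

lemma mul_mem_ball {X : Set G} {g x : G} {k : ℕ} (hg : g ∈ ball X k) (hx : x ∈ X) :
    g * x ∈ ball X (k + 1) := by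
  obtain ⟨l, hl, hlen, rfl⟩ := hg
  refine ⟨l ++ [x], ?_, ?_, by simp⟩
  · intro y hy
    rcases List.mem_append.1 hy with h | h
    · exact hl y h
    · simp at h; subst h; exact hx
  · simp; omega

lemma submonoid_closure_top (hX : Subgroup.closure X = ⊤) :
    Submonoid.closure X = ⊤ := by
  have hinv : X⁻¹ ⊆ (Submonoid.closure X : Set G) := by
    intro y hy
    rw [Set.mem_inv] at hy
    have hx : y⁻¹ ∈ Submonoid.closure X := Submonoid.subset_closure hy
    have h1 : 1 ≤ orderOf y⁻¹ := orderOf_pos y⁻¹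
    have hmul : (y⁻¹) ^ (orderOf y⁻¹ - 1) * y⁻¹ = 1 := by
      rw [← pow_succ, Nat.sub_add_cancel h1, pow_orderOf_eq_one]
    have : y = (y⁻¹) ^ (orderOf y⁻¹ - 1) := by
      have := eq_inv_of_mul_eq_one_left hmul
      rw [inv_inv] at this
      exact this.symm
    rw [this]
    exact Submonoid.pow_mem _ hx _
  have : (Subgroup.closure X).toSubmonoid = Submonoid.closure (X ∪ X⁻¹) :=
    Subgroup.closure_toSubmonoid X
  rw [hX] at this
  have hle : Submonoid.closure (X ∪ X⁻¹) ≤ Submonoid.closure X :=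
    Submonoid.closure_le.2 (Set.union_subset Submonoid.subset_closure hinv)
  have : (⊤ : Submonoid G) ≤ Submonoid.closure X := by
    rw [show (⊤ : Submonoid G) = (⊤ : Subgroup G).toSubmonoid from rfl, this]
    exact hle
  exact top_le_iff.1 this

lemma ball_absorb {X : Set G} {k : ℕ} (hX : Subgroup.closure X = ⊤)
    (h : ball X (k + 1) ⊆ ball X k) : ball X k = Set.univ := by
  apply Set.eq_univ_of_forall
  intro g
  have hg : g ∈ Submonoid.closure X := by
    rw [submonoid_closure_top X hX]; trivial
  obtain ⟨l, hl, rfl⟩ := Submonoid.exists_list_of_mem_closure hg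
  clear hg
  induction l using List.reverseRecOn with
  | nil => simpa using one_mem_ball X k
  | append_singleton l x ih =>
    have hx : x ∈ X := hl x (by simp)
    have hl' : ∀ y ∈ l, y ∈ X := fun y hy => hl y (by simp [hy])
    have := mul_mem_ball (ih hl') hx
    rw [List.prod_append, List.prod_singleton]
    exact h this
end Aux

lemma ball_grow {G : Type*} [Group G] [Fintype G] (X : Set G)
    (hX : Subgroup.closure X = ⊤) (h1 : (1 : G) ∉ X) :
    ∀ k : ℕ, ball X (k + 1) = Set.univ ∨ (ball X (k + 1)).ncard ≥ k + 1 + X.ncard := by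
  intro k
  induction k with
  | zero =>
    right
    have hsub : insert (1 : G) X ⊆ ball X 1 := by
      rintro g (rfl | hg)
      · exact one_mem_ball X 1
      · exact ⟨[g], by simpa using hg, by simp, by simp⟩
    calc 0 + 1 + X.ncard = (insert (1 : G) X).ncard := by
          rw [Set.ncard_insert_of_notMem h1 X.toFinite]; omega
      _ ≤ (ball X 1).ncard := Set.ncard_le_ncard hsub (Set.toFinite _)
  | succ k ih =>
    by_cases huniv : ball X (k + 1) = Set.univ
    · left
      exact Set.eq_univ_of_univ_subset (huniv ▸ ball_mono (by omega))
    rcases ih with h | h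
    · exact absurd h huniv
    by_cases huniv2 : ball X (k + 1 + 1) = Set.univ
    · left; exact huniv2
    right
    have hss : ball X (k + 1) ⊂ ball X (k + 2) := by
      refine ⟨ball_mono (by omega), fun hcon => huniv (ball_absorb hX hcon)⟩
    have hlt := Set.ncard_lt_ncard hss (Set.toFinite _)
    show (ball X (k + 2)).ncard ≥ k + 2 + X.ncard
    omega

theorem stmt0_aux {G : Type*} [Group G] [Fintype G] (X : Set G)
    (hX : Subgroup.closure X = ⊤) (h1 : (1 : G) ∉ X) :
    diamW G X ≤ Fintype.card G - X.ncard := by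
  set N := Fintype.card G - X.ncard with hN
  have hXlt : X.ncard < Fintype.card G := by
    have hss : X ⊂ Set.univ := ⟨Set.subset_univ _, fun hcon => h1 (hcon (Set.mem_univ 1))⟩
    have := Set.ncard_lt_ncard hss (Set.toFinite _)
    rwa [Set.ncard_univ, Nat.card_eq_fintype_card] at this
  have hN1 : 1 ≤ N := by omega
  have hball : ball X N = Set.univ := by
    rcases ball_grow X hX h1 (N - 1) with h | h
    · rwa [Nat.sub_add_cancel hN1] at h
    · rw [Nat.sub_add_cancel hN1] at h
      have hcard : Fintype.card G ≤ (ball X N).ncard := by omega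
      exact Set.eq_of_subset_of_ncard_le (Set.subset_univ _)
        (by rwa [Set.ncard_univ, Nat.card_eq_fintype_card]) (Set.toFinite _)
  have hle : ∀ g : G, wLen X g ≤ N := by
    intro g
    have hg : g ∈ ball X N := hball ▸ Set.mem_univ g
    obtain ⟨l, hl, hlen, hprod⟩ := hg
    exact le_trans (Nat.sInf_le ⟨l, hl, rfl, hprod⟩) hlen
  refine csSup_le ⟨wLen X 1, 1, rfl⟩ ?_
  rintro b ⟨g, rfl⟩
  exact hle g


theorem stmt0 {G : Type*} [Group G] [Fintype G] (X : Set G)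
    (hX : Subgroup.closure X = ⊤) (h1 : (1 : G) ∉ X) :
    diamW G X ≤ Fintype.card G - X.ncard :=
  stmt0_aux X hX h1
end

section
/- Let G be a finite group. Then the maximum over all generating sets X of G of the diameter diam(G,X) is at most |G| − rank(G), where rank(G) is the minimal size of a generating set of G. -/
/-!
Take a geodesic word `x₁ ⋯ xₙ` for `g` and read it from the right. Each new suffix product has
length exactly its number of letters, so it is a new element of the subgroup generated by the
letters read so far; a letter not in the subgroup generated by the letters after it is a further
new element (unless it is the first letter read, which is itself a suffix product). Hence the subgroup `H` generated by all letters has at least `n + k` elements, where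
`k` is the number of such fresh letters, which generate `H`. Adding generators one at a time,
each outside the current subgroup, strictly enlarges it, so `rank G ≤ k + |G| - |H|`, and
`n + rank G ≤ |G|` follows.
-/

open Subgroup

namespace Subgroup

variable {G : Type*} [Group G]

lemma card_lt_card_of_lt [Finite G] {H K : Subgroup G} (h : H < K) :
    Nat.card H < Nat.card K := by
  have hHK := Set.ncard_lt_ncard (SetLike.coe_ssubset_coe.mpr h)
  rwa [← Nat.card_coe_set_eq, ← Nat.card_coe_set_eq] at hHK

lemma closure_insert_eq_of_mem {x : G} {s : Set G} (hx : x ∈ closure s) :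
    closure (insert x s) = closure s := by
  rw [Set.insert_eq, closure_union, sup_eq_right, closure_le, Set.singleton_subset_iff]
  exact hx

end Subgroup

section WordLength

variable {G : Type*} [Group G] {X : Set G}

lemma wLen_le_length {l : List G} (hl : ∀ x ∈ l, x ∈ X) : wLen X l.prod ≤ l.length :=
  Nat.sInf_le ⟨l, hl, rfl, rfl⟩

lemma wLen_one : wLen X (1 : G) = 0 :=
  Nat.eq_zero_of_le_zero (wLen_le_length (l := []) (by simp))

lemma exists_word_length_eq_wLen {g : G} (hg : g ∈ Submonoid.closure X) :
    ∃ l : List G, (∀ x ∈ l, x ∈ X) ∧ l.length = wLen X g ∧ l.prod = g := by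
  obtain ⟨l, hlX, rfl⟩ := Submonoid.exists_list_of_mem_closure hg
  have hne :
      {n | ∃ w : List G, (∀ x ∈ w, x ∈ X) ∧ w.length = n ∧ w.prod = l.prod}.Nonempty :=
    ⟨_, l, hlX, rfl, rfl⟩
  exact Nat.sInf_mem hne

lemma wLen_mul_le {g h : G} (hg : g ∈ Submonoid.closure X) (hh : h ∈ Submonoid.closure X) :
    wLen X (g * h) ≤ wLen X g + wLen X h := by
  obtain ⟨u, huX, hu, rfl⟩ := exists_word_length_eq_wLen hg
  obtain ⟨v, hvX, hv, rfl⟩ := exists_word_length_eq_wLen hh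
  rw [← hu, ← hv, ← List.length_append, ← List.prod_append]
  exact wLen_le_length fun x hx => (List.mem_append.mp hx).elim (huX x) (hvX x)

lemma wLen_le_one {x : G} (hx : x ∈ X) : wLen X x ≤ 1 := by
  simpa using wLen_le_length (l := [x]) (by simpa using hx)

variable (X) in
def IsGeodesic (l : List G) : Prop :=
  (∀ x ∈ l, x ∈ X) ∧ wLen X l.prod = l.length

lemma exists_isGeodesic_prod_eq {g : G} (hg : g ∈ Submonoid.closure X) :
    ∃ l, IsGeodesic X l ∧ l.prod = g := by
  obtain ⟨l, hlX, hlen, rfl⟩ := exists_word_length_eq_wLen hg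
  exact ⟨l, ⟨hlX, hlen.symm⟩, rfl⟩

lemma IsGeodesic.tail {x : G} {l : List G} (h : IsGeodesic X (x :: l)) : IsGeodesic X l := by
  have hlX : ∀ a ∈ l, a ∈ X := fun a ha => h.1 a (List.mem_cons_of_mem x ha)
  have hx : wLen X x ≤ 1 := wLen_le_one (h.1 x List.mem_cons_self)
  have hsub : wLen X (x * l.prod) ≤ wLen X x + wLen X l.prod :=
    wLen_mul_le (Submonoid.subset_closure (h.1 x List.mem_cons_self))
      (Submonoid.list_prod_mem _ fun a ha => Submonoid.subset_closure (hlX a ha))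
  have hcons := h.2
  rw [List.prod_cons, List.length_cons] at hcons
  exact ⟨hlX, le_antisymm (wLen_le_length hlX) (by omega)⟩

end WordLength

section FreshLetters

variable {G : Type*} [Group G]

open Classical in
noncomputable def freshLetters : List G → Finset G
  | [] => ∅
  | x :: l => if x ∈ closure {a | a ∈ l} then freshLetters l else insert x (freshLetters l)

omit [Group G] in
lemma setOf_mem_cons (x : G) (l : List G) : {a | a ∈ x :: l} = insert x {a | a ∈ l} := by
  ext; simp

lemma closure_freshLetters (l : List G) :
    closure (freshLetters l : Set G) = closure {a | a ∈ l} := by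
  classical
  induction l with
  | nil => simp [freshLetters]
  | cons x l ih =>
    rw [freshLetters, setOf_mem_cons]
    split_ifs with hx
    · rw [ih, closure_insert_eq_of_mem hx]
    · rw [Finset.coe_insert, Set.insert_eq, Set.insert_eq, Subgroup.closure_union,
        Subgroup.closure_union, ih]

variable (X : Set G) in
def closureBall (l : List G) : Set G :=
  {a | a ∈ closure {a | a ∈ l} ∧ wLen X a ≤ l.length}

lemma closureBall_subset_cons {X : Set G} (x : G) (l : List G) :
    closureBall X l ⊆ closureBall X (x :: l) := fun _ ⟨ha, hlen⟩ =>
  ⟨closure_mono (fun _ => List.mem_cons_of_mem x) ha, hlen.trans (Nat.le_succ _)⟩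

lemma one_mem_closureBall (X : Set G) (l : List G) : (1 : G) ∈ closureBall X l :=
  ⟨one_mem _, by simp [wLen_one]⟩

lemma mem_closureBall_cons {X : Set G} {x : G} (hx : x ∈ X) (l : List G) :
    x ∈ closureBall X (x :: l) :=
  ⟨subset_closure List.mem_cons_self, (wLen_le_one hx).trans (by simp)⟩

lemma IsGeodesic.prod_mem_closureBall {X : Set G} {l : List G} (hl : IsGeodesic X l) :
    l.prod ∈ closureBall X l :=
  ⟨list_prod_mem fun _ ha => subset_closure ha, hl.2.le⟩

lemma IsGeodesic.prod_notMem_closureBall_tail {X : Set G} {x : G} {l : List G}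
    (hl : IsGeodesic X (x :: l)) : (x :: l).prod ∉ closureBall X l := fun h => by
  have hlen := h.2
  rw [hl.2, List.length_cons] at hlen
  omega

end FreshLetters

lemma IsGeodesic.length_add_card_freshLetters_le {G : Type*} [Group G] [Finite G] {X : Set G}
    {l : List G} (hl : IsGeodesic X l) :
    l.length + (freshLetters l).card ≤ (closureBall X l).ncard := by
  induction l with
  | nil => simp [freshLetters]
  | cons x l ih =>
    classical
    have ih := ih hl.tail
    have hprod_mem := hl.prod_mem_closureBall
    have hprod_notMem := hl.prod_notMem_closureBall_tail
    have hx_mem := mem_closureBall_cons (hl.1 x List.mem_cons_self) l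
    have hsub := closureBall_subset_cons (X := X) x l
    rw [List.prod_cons] at hprod_mem hprod_notMem
    rw [freshLetters]
    split_ifs with hx
    · calc l.length + 1 + (freshLetters l).card
          ≤ (insert (x * l.prod) (closureBall X l)).ncard := by
            rw [Set.ncard_insert_of_notMem hprod_notMem]; omega
        _ ≤ (closureBall X (x :: l)).ncard :=
            Set.ncard_le_ncard (Set.insert_subset hprod_mem hsub)
    · have hx_notMem : x ∉ closureBall X l := fun h => hx h.1
      have hcard := Finset.card_insert_le x (freshLetters l)
      -- the fresh letter `x` can coincide with the new suffix product `x * l.prod` only if `l = []`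
      rcases eq_or_ne l [] with rfl | hl_ne
      · have hx_ne : x ≠ 1 := fun h => hx (h ▸ one_mem _)
        calc [].length + 1 + (insert x (freshLetters ([] : List G))).card
            = ({x, 1} : Set G).ncard := by simp [freshLetters, Set.ncard_pair hx_ne]
          _ ≤ (closureBall X [x]).ncard := Set.ncard_le_ncard
            (Set.insert_subset hx_mem (Set.singleton_subset_iff.mpr (one_mem_closureBall X _)))
      · have hx_ne : x ≠ x * l.prod := by
          intro h
          have : wLen X l.prod = 0 := by rw [mul_eq_left.mp h.symm, wLen_one]
          exact hl_ne (List.eq_nil_of_length_eq_zero (hl.tail.2 ▸ this))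
        calc l.length + 1 + (insert x (freshLetters l)).card
            ≤ (insert x (insert (x * l.prod) (closureBall X l))).ncard := by
              rw [Set.ncard_insert_of_notMem (by simp [hx_ne, hx_notMem]),
                Set.ncard_insert_of_notMem hprod_notMem]
              omega
          _ ≤ (closureBall X (x :: l)).ncard :=
            Set.ncard_le_ncard (Set.insert_subset hx_mem (Set.insert_subset hprod_mem hsub))

lemma rk_add_card_closure_le {G : Type*} [Group G] [Finite G] (S : Finset G) :
    rk G + Nat.card (closure (S : Set G)) ≤ S.card + Nat.card G := by
  classical
  induction hn : Nat.card G - Nat.card (closure (S : Set G))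
    using Nat.strong_induction_on generalizing S with
  | _ n ih =>
  by_cases htop : closure (S : Set G) = ⊤
  · have hrk : rk G ≤ S.card := Nat.sInf_le ⟨S, rfl, htop⟩
    rw [htop, card_top]
    omega
  · obtain ⟨x, hx⟩ : ∃ x, x ∉ closure (S : Set G) := by simpa [eq_top_iff'] using htop
    have hlt : closure (S : Set G) < closure ((insert x S : Finset G) : Set G) := by
      rw [Finset.coe_insert]
      exact lt_of_le_of_ne (closure_mono (Set.subset_insert x _))
        fun h => hx (h ▸ subset_closure (Set.mem_insert x _))
    have hcard_lt := card_lt_card_of_lt hlt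
    have hcard_le := card_le_card_group (closure ((insert x S : Finset G) : Set G))
    have := ih _ (by omega) (insert x S) rfl
    have := Finset.card_insert_le x S
    omega

lemma wLen_add_rk_le {G : Type*} [Group G] [Finite G] {X : Set G} (hX : closure X = ⊤)
    (g : G) : wLen X g + rk G ≤ Nat.card G := by
  have hg : g ∈ Submonoid.closure X := by
    rw [← closure_toSubmonoid_of_finite, hX]
    exact mem_top g
  obtain ⟨l, hl, rfl⟩ := exists_isGeodesic_prod_eq hg
  have hball : (closureBall X l).ncard ≤ Nat.card (closure (freshLetters l : Set G)) := by
    rw [closure_freshLetters, ← Nat.card_coe_set_eq]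
    exact Set.ncard_le_ncard fun _ ha => ha.1
  have := hl.length_add_card_freshLetters_le
  have := rk_add_card_closure_le (freshLetters l)
  rw [hl.2]
  omega

theorem stmt1 {G : Type*} [Group G] [Fintype G] :
    DW G ≤ Fintype.card G - rk G := by
  rw [← Nat.card_eq_fintype_card]
  refine csSup_le' ?_
  rintro _ ⟨X, hX, rfl⟩
  refine csSup_le' ?_
  rintro _ ⟨g, rfl⟩
  exact Nat.le_sub_of_add_le (wLen_add_rk_le hX g)
end

section
/- Let G be a finite group and k a positive integer. Then k · rank(G/G') ≤ rank(G^k) ≤ k · rank(G), where G' is the commutator subgroup of G. -/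
/-!
A finite abelian group `A ≅ ∏ ℤ/pᵢ^eᵢ` (all `eᵢ ≥ 1`) has rank equal to the largest number `m` of
factors belonging to one prime `q`. Indeed, the factors can be sorted into `m` classes of pairwise
distinct primes, each class being cyclic by the Chinese remainder theorem; conversely `A` surjects
onto `(ℤ/q)^m`, which needs `m` generators. In `A^k` the prime `q` owns `k m` factors, so
`rank (A^k) ≥ k · rank A`. Applied to `A = G/G'`, whose `k`-th power is a quotient of `G^k`, this is
the lower bound; the upper bound holds because `k` copies of a generating set of `G` generate `G^k`.
-/

open Subgroup

open Finset Function

namespace Group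

@[to_additive]
theorem rank_pi_le_sum {ι : Type*} [Fintype ι] {G : ι → Type*} [∀ i, Group (G i)]
    [∀ i, FG (G i)] : rank (∀ i, G i) ≤ ∑ i, rank (G i) := by
  classical
  choose S hcard hS using fun i => rank_spec (G i)
  let T : Finset (∀ i, G i) := univ.biUnion fun i => (S i).image (MonoidHom.mulSingle G i)
  have hT : Subgroup.closure (T : Set (∀ i, G i)) = ⊤ := by
    rw [eq_top_iff]
    rintro g -
    rw [← noncommProd_mulSingle g]
    refine Subgroup.noncommProd_mem _ _ fun i _ => ?_
    have hmap : (Subgroup.closure (S i : Set (G i))).map (MonoidHom.mulSingle G i) ≤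
        Subgroup.closure T := by
      rw [MonoidHom.map_closure]
      refine Subgroup.closure_mono ?_
      simp only [T, coe_biUnion, coe_image, coe_univ, Set.mem_univ, Set.iUnion_true]
      exact Set.subset_iUnion (fun i => MonoidHom.mulSingle G i '' S i) i
    exact hmap ⟨g i, by simp [hS i], rfl⟩
  calc rank (∀ i, G i) ≤ #T := rank_le hT
    _ ≤ ∑ i, #((S i).image (MonoidHom.mulSingle G i)) := card_biUnion_le
    _ ≤ ∑ i, rank (G i) := sum_le_sum fun i _ => card_image_le.trans (hcard i).le

theorem rank_eq_addRank_additive (G : Type*) [Group G] [FG G] :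
    rank G = AddGroup.rank (Additive G) := by
  have hgen (S : Finset G) : Subgroup.closure (S : Set G) = ⊤ ↔
      AddSubgroup.closure (S.map Additive.ofMul.toEmbedding : Set (Additive G)) = ⊤ := by
    rw [coe_map, Equiv.coe_toEmbedding, Equiv.image_eq_preimage_symm,
      ← Subgroup.toAddSubgroup.injective.eq_iff, Subgroup.toAddSubgroup_closure]
    rfl
  obtain ⟨S, hS, hSc⟩ := rank_spec G
  obtain ⟨T, hT, hTc⟩ := AddGroup.rank_spec (Additive G)
  have hST : (T.map Additive.toMul.toEmbedding).map Additive.ofMul.toEmbedding = T := by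
    ext x
    simp
  refine le_antisymm ?_ ?_
  · calc rank G ≤ #(T.map Additive.toMul.toEmbedding) := rank_le ((hgen _).2 (by rwa [hST]))
      _ = _ := (card_map _).trans hT
  · calc AddGroup.rank (Additive G) ≤ #(S.map Additive.ofMul.toEmbedding) :=
          AddGroup.rank_le ((hgen S).1 hSc)
      _ = _ := (card_map _).trans hS

end Group

theorem AddGroup.rank_le_one_of_isAddCyclic (G : Type*) [AddGroup G] [IsAddCyclic G]
    [AddGroup.FG G] : AddGroup.rank G ≤ 1 := by
  obtain ⟨g, hg⟩ := isAddCyclic_iff_exists_zmultiples_eq_top.1 ‹IsAddCyclic G›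
  calc AddGroup.rank G ≤ #{g} :=
        AddGroup.rank_le (by rw [coe_singleton, ← AddSubgroup.zmultiples_eq_closure, hg])
    _ = 1 := card_singleton g

theorem rk_eq_rank (G : Type*) [Group G] [Group.FG G] : rk G = Group.rank G :=
  le_antisymm (Nat.sInf_le (Group.rank_spec G))
    (le_csInf ⟨_, Group.rank_spec G⟩ fun _ ⟨_, hS, hSc⟩ => hS ▸ Group.rank_le hSc)

theorem Module.finrank_le_addRank (K V : Type*) [DivisionRing K] [AddCommGroup V] [Module K V]
    [AddGroup.FG V] : finrank K V ≤ AddGroup.rank V := by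
  obtain ⟨T, hT, hTc⟩ := AddGroup.rank_spec V
  have hspan : Submodule.span K (T : Set V) = ⊤ := by
    rw [eq_top_iff]
    rintro v -
    have hle := (AddSubgroup.closure_le (Submodule.span K (T : Set V)).toAddSubgroup).2
      Submodule.subset_span
    exact hle (hTc ▸ AddSubgroup.mem_top v)
  calc finrank K V = finrank K (Submodule.span K (T : Set V)) := by rw [hspan, finrank_top]
    _ ≤ (T : Set V).toFinset.card := finrank_span_le_card _
    _ = AddGroup.rank V := by rw [toFinset_coe, hT]

theorem card_filter_dvd_le_addRank_pi_zmod {ι : Type*} [Fintype ι] (n : ι → ℕ)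
    [∀ i, NeZero (n i)] {q : ℕ} (hq : q.Prime) :
    #{i | q ∣ n i} ≤ AddGroup.rank (∀ i, ZMod (n i)) := by
  have := Fact.mk hq
  let f : (∀ i, ZMod (n i)) →+ ({i // q ∣ n i} → ZMod q) := AddMonoidHom.pi fun s =>
    (ZMod.castHom s.2 (ZMod q)).toAddMonoidHom.comp (Pi.evalAddMonoidHom _ s.1)
  have hf : Surjective f := fun y =>
    ⟨fun i => if h : q ∣ n i then ((y ⟨i, h⟩).val : ZMod (n i)) else 0,
      funext fun s => by
        change ZMod.castHom s.2 (ZMod q) (dite _ _ _) = y s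
        rw [dif_pos s.2, map_natCast, ZMod.natCast_zmod_val]⟩
  calc #{i | q ∣ n i} = Module.finrank (ZMod q) ({i // q ∣ n i} → ZMod q) := by
        simp [Fintype.card_subtype]
    _ ≤ AddGroup.rank ({i // q ∣ n i} → ZMod q) := Module.finrank_le_addRank _ _
    _ ≤ _ := AddGroup.rank_le_of_surjective f hf

theorem exists_fin_injective_prod_of_card_fiber_le {ι α : Type*} [Fintype ι] [DecidableEq α] (f : ι → α)
    {m : ℕ} (h : ∀ a, #{i | f i = a} ≤ m) : ∃ σ : ι → Fin m, Injective fun i => (f i, σ i) := by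
  have e (a : α) : {i // f i = a} ↪ Fin m :=
    (Function.Embedding.nonempty_of_card_le (by simpa [Fintype.card_subtype] using h a)).some
  exact ⟨fun i => e (f i) ⟨i, rfl⟩, (Equiv.sigmaEquivProd _ _).injective.comp
    ((injective_id.sigma_map fun a => (e a).injective).comp (Equiv.sigmaFiberEquiv f).symm.injective)⟩

theorem addRank_pi_zmod_le_card {ι κ : Type*} [Fintype ι] [Fintype κ] (n : ι → ℕ)
    [∀ i, NeZero (n i)] (σ : ι → κ)
    (hσ : ∀ c, Pairwise (Nat.Coprime on fun i : {i // σ i = c} => n i)) :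
    AddGroup.rank (∀ i, ZMod (n i)) ≤ Fintype.card κ := by
  classical
  let N (c : κ) : ℕ := ∏ i : {i // σ i = c}, n i
  have (c : κ) : NeZero (N c) := ⟨prod_ne_zero_iff.2 fun i _ => NeZero.ne (n i)⟩
  have hdvd (i : ι) : n i ∣ N (σ i) :=
    dvd_prod_of_mem (fun j : {j // σ j = σ i} => n j) (mem_univ ⟨i, rfl⟩)
  let f : (∀ c, ZMod (N c)) →+ ∀ i, ZMod (n i) := AddMonoidHom.pi fun i =>
    (ZMod.castHom (hdvd i) _).toAddMonoidHom.comp (Pi.evalAddMonoidHom _ (σ i))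
  have hf : Surjective f := fun y =>
    ⟨fun c => (ZMod.prodEquivPi _ (hσ c)).symm fun i => y i, funext fun i => by
      change ZMod.castHom (hdvd i) _ ((ZMod.prodEquivPi _ (hσ (σ i))).symm fun j => y j) = y i
      rw [← ZMod.prodEquivPi_apply _ (hσ (σ i)) _ ⟨i, rfl⟩, RingEquiv.apply_symm_apply]⟩
  calc AddGroup.rank (∀ i, ZMod (n i)) ≤ AddGroup.rank (∀ c, ZMod (N c)) :=
        AddGroup.rank_le_of_surjective f hf
    _ ≤ ∑ c, AddGroup.rank (ZMod (N c)) := AddGroup.rank_pi_le_sum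
    _ ≤ ∑ _ : κ, 1 := sum_le_sum fun c _ => AddGroup.rank_le_one_of_isAddCyclic _
    _ = Fintype.card κ := by simp

theorem addRank_pi_zmod_primePow_le {ι : Type*} [Fintype ι] (p e : ι → ℕ)
    [∀ i, NeZero (p i ^ e i)] (hp : ∀ i, (p i).Prime) {m : ℕ} (hm : ∀ q, #{i | p i = q} ≤ m) :
    AddGroup.rank (∀ i, ZMod (p i ^ e i)) ≤ m := by
  obtain ⟨σ, hσ⟩ := exists_fin_injective_prod_of_card_fiber_le p hm
  refine (addRank_pi_zmod_le_card _ σ fun c i j hij => ?_).trans_eq (Fintype.card_fin m)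
  have hpij : p i ≠ p j := fun h => hij (Subtype.ext (hσ (Prod.ext h (i.2.trans j.2.symm))))
  exact Nat.Coprime.pow _ _ ((Nat.coprime_primes (hp i) (hp j)).2 hpij)

theorem AddCommGroup.exists_addEquiv_pi_zmod_primePow (A : Type*) [AddCommGroup A] [Finite A] :
    ∃ (ι : Type) (_ : Fintype ι) (p e : ι → ℕ), (∀ i, (p i).Prime) ∧ (∀ i, e i ≠ 0) ∧
      Nonempty (A ≃+ ∀ i, ZMod (p i ^ e i)) := by
  obtain ⟨ι, _, p, hp, e, ⟨φ⟩⟩ := equiv_directSum_zmod_of_finite A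
  let restrict : (∀ i, ZMod (p i ^ e i)) →+ ∀ i : {i // e i ≠ 0}, ZMod (p i ^ e i) :=
    AddMonoidHom.pi fun i => Pi.evalAddMonoidHom _ i.1
  have hinj : Injective restrict := fun x y hxy => funext fun i => by
    by_cases hi : e i = 0
    · have : Subsingleton (ZMod (p i ^ e i)) := ZMod.subsingleton_iff.2 (by simp [hi])
      exact Subsingleton.elim _ _
    · exact congrFun hxy ⟨i, hi⟩
  have hsurj : Surjective restrict := fun y =>
    ⟨fun i => if hi : e i = 0 then 0 else y ⟨i, hi⟩, funext fun i => dif_neg i.2⟩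
  exact ⟨{i // e i ≠ 0}, inferInstance, fun i => p i, fun i => e i, fun i => hp i, fun i => i.2,
    ⟨(φ.trans (DirectSum.addEquivProd _)).trans (AddEquiv.ofBijective restrict ⟨hinj, hsurj⟩)⟩⟩

theorem AddCommGroup.mul_addRank_le_addRank_pi (k : ℕ) (A : Type*) [AddCommGroup A] [Finite A] :
    k * AddGroup.rank A ≤ AddGroup.rank (Fin k → A) := by
  obtain ⟨ι, _, p, e, hp, he, ⟨φ⟩⟩ := exists_addEquiv_pi_zmod_primePow A
  have (i : ι) : NeZero (p i ^ e i) := ⟨pow_ne_zero _ (hp i).ne_zero⟩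
  rcases isEmpty_or_nonempty ι with hι | hι
  · have : Subsingleton A := φ.toEquiv.subsingleton
    simp [AddGroup.rank_eq_zero A]
  obtain ⟨i₀, hi₀⟩ := Finite.exists_max fun i => #{j | p j = p i}
  have hmax (q : ℕ) : #{j | p j = q} ≤ #{j | p j = p i₀} := by
    by_cases hq : ∃ i, p i = q
    · obtain ⟨i, rfl⟩ := hq
      exact hi₀ i
    · simp only [not_exists] at hq
      simp [hq]
  have hdvd (i : ι) : p i₀ ∣ p i ^ e i ↔ p i = p i₀ :=
    ⟨fun h => ((Nat.prime_dvd_prime_iff_eq (hp i₀) (hp i)).1 ((hp i₀).dvd_of_dvd_pow h)).symm,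
      fun h => h ▸ dvd_pow_self _ (he i)⟩
  let ψ : (Fin k → A) ≃+ ∀ x : Fin k × ι, ZMod (p x.2 ^ e x.2) :=
    (AddEquiv.piCongrRight fun _ => φ).trans
      { toFun := fun f x => f x.1 x.2, invFun := fun g j i => g (j, i),
        left_inv := fun _ => rfl, right_inv := fun _ => rfl, map_add' := fun _ _ => rfl }
  calc k * AddGroup.rank A ≤ k * #{j | p j = p i₀} := by
        rw [AddGroup.rank_congr φ]
        exact Nat.mul_le_mul_left k (addRank_pi_zmod_primePow_le p e hp hmax)
    _ = #((univ : Finset (Fin k)) ×ˢ ({j | p j = p i₀} : Finset ι)) := by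
        rw [card_product, card_univ, Fintype.card_fin]
    _ = #{x : Fin k × ι | p i₀ ∣ p x.2 ^ e x.2} := by
        congr 1
        ext x
        simp [hdvd]
    _ ≤ AddGroup.rank (∀ x : Fin k × ι, ZMod (p x.2 ^ e x.2)) :=
        card_filter_dvd_le_addRank_pi_zmod _ (hp i₀)
    _ = AddGroup.rank (Fin k → A) := (AddGroup.rank_congr ψ).symm

theorem CommGroup.mul_rank_le_rank_pi (k : ℕ) (Q : Type*) [CommGroup Q] [Finite Q] :
    k * Group.rank Q ≤ Group.rank (Fin k → Q) := by
  rw [Group.rank_eq_addRank_additive, Group.rank_eq_addRank_additive,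
    AddGroup.rank_congr (AddEquiv.piAdditive fun _ : Fin k => Q)]
  exact AddCommGroup.mul_addRank_le_addRank_pi k (Additive Q)

theorem stmt3_general {G : Type*} [Group G] [Fintype G] (k : ℕ) :
    k * rk (G ⧸ commutator G) ≤ rk (Fin k → G) ∧
      rk (Fin k → G) ≤ k * rk G := by
  simp only [rk_eq_rank]
  constructor
  · calc k * Group.rank (G ⧸ commutator G) = k * Group.rank (Abelianization G) := rfl
      _ ≤ Group.rank (Fin k → Abelianization G) := CommGroup.mul_rank_le_rank_pi k _
      _ ≤ Group.rank (Fin k → G) := Group.rank_le_of_surjective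
          ((QuotientGroup.mk' _).compLeft (Fin k)) (QuotientGroup.mk'_surjective _).comp_left
  · simpa using Group.rank_pi_le_sum (G := fun _ : Fin k => G)

theorem stmt3 {G : Type*} [Group G] [Fintype G] (k : ℕ) (hk : 0 < k) :
    k * rk (G ⧸ commutator G) ≤ rk (Fin k → G) ∧
      rk (Fin k → G) ≤ k * rk G :=
  stmt3_general k
end

section
/- Let G be a finite group that is not perfect (G ≠ G'), and suppose G is generated by k elements a₁,…,a_k whose orders are pairwise coprime. Then for every n ≥ k, rank(G^n) = n. -/
/-!
A non-perfect finite group `G` maps onto `ℤ/p` for some prime `p`, so `Gⁿ` maps onto the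
`n`-dimensional `𝔽_p`-vector space `𝔽_pⁿ` and needs at least `n` generators. Conversely, put the
generators `a₀, …, a_{k-1}` in consecutive coordinates of `Gⁿ` and take the `n` cyclic shifts of
this tuple. Since the orders of the `aᵢ` are pairwise coprime, a suitable power of a shift kills
every entry except one chosen `aᵢ`, so the shifts generate every `aᵢ` in every coordinate.
-/

open Subgroup

open Function

theorem rk_eq_card_of_closure_range_eq_top {H ι : Type*} [Group H] [Fintype ι] (g : ι → H)
    (hg : closure (Set.range g) = ⊤)
    (hmin : ∀ S : Finset H, closure (S : Set H) = ⊤ → Fintype.card ι ≤ S.card) :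
    rk H = Fintype.card ι := by
  classical
  have hmem : (Finset.univ.image g).card ∈
      {n | ∃ S : Finset H, S.card = n ∧ closure (S : Set H) = ⊤} :=
    ⟨_, rfl, by rwa [Finset.coe_image, Finset.coe_univ, Set.image_univ]⟩
  refine le_antisymm ((Nat.sInf_le hmem).trans Finset.card_image_le) (le_csInf ⟨_, hmem⟩ ?_)
  rintro _ ⟨S, rfl, hS⟩
  exact hmin S hS

theorem finrank_le_card_of_closure_eq_top {K V H : Type*} [DivisionRing K] [AddCommGroup V]
    [Module K V] [Group H] (f : H →* Multiplicative V) (hf : Surjective f)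
    {S : Finset H} (hS : closure (S : Set H) = ⊤) : Module.finrank K V ≤ S.card := by
  classical
  set T := S.image fun s => (f s).toAdd
  have hspan : Submodule.span K (T : Set V) = ⊤ := by
    have hle : closure (f '' S) ≤ (Submodule.span K (T : Set V)).toAddSubgroup.toSubgroup :=
      (closure_le _).mpr <| by
        rintro _ ⟨s, hs, rfl⟩
        change (f s).toAdd ∈ Submodule.span K (T : Set V)
        exact Submodule.subset_span (Finset.mem_image_of_mem _ hs)
    rw [← MonoidHom.map_closure, hS, map_top_of_surjective f hf] at hle
    exact eq_top_iff.mpr fun v _ => hle (mem_top (Multiplicative.ofAdd v))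
  calc Module.finrank K V = (T : Set V).finrank K := by
        rw [Set.finrank, hspan, finrank_top]
    _ ≤ T.card := finrank_span_finset_le_card T
    _ ≤ S.card := Finset.card_image_le

theorem CommGroup.exists_surjective_multiplicative_zmod (A : Type*) [CommGroup A] [Finite A]
    [Nontrivial A] : ∃ p, p.Prime ∧ ∃ f : A →* Multiplicative (ZMod p), Surjective f := by
  obtain ⟨ι, _, n, hn, ⟨e⟩⟩ := CommGroup.equiv_prod_multiplicative_zmod_of_finite A
  obtain ⟨i⟩ : Nonempty ι := by
    by_contra hι
    rw [not_nonempty_iff] at hι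
    exact not_subsingleton A e.toEquiv.subsingleton
  have hp : (n i).minFac.Prime := Nat.minFac_prime (hn i).ne'
  refine ⟨_, hp, ((ZMod.castHom (Nat.minFac_dvd (n i)) _).toAddMonoidHom.toMultiplicative.comp
    (Pi.evalMonoidHom _ i)).comp e.toMonoidHom, ?_⟩
  exact (ZMod.castHom_surjective (Nat.minFac_dvd (n i))).comp
    ((surjective_eval i).comp e.surjective)

theorem exists_surjective_multiplicative_zmod_of_commutator_ne_top {G : Type*} [Group G]
    [Finite G] (hG : commutator G ≠ ⊤) :
    ∃ p, p.Prime ∧ ∃ f : G →* Multiplicative (ZMod p), Surjective f := by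
  have : Nontrivial (Abelianization G) := by
    refine not_subsingleton_iff_nontrivial.mp fun _ => hG (eq_top_iff.mpr fun x _ => ?_)
    exact (QuotientGroup.eq_one_iff x).mp (Subsingleton.elim (Abelianization.of x) 1)
  obtain ⟨p, hp, f, hf⟩ := CommGroup.exists_surjective_multiplicative_zmod (Abelianization G)
  exact ⟨p, hp, f.comp Abelianization.of, hf.comp QuotientGroup.mk_surjective⟩

theorem card_le_card_of_closure_eq_top_pi {G ι : Type*} [Group G] [Finite G] [Fintype ι]
    (hG : commutator G ≠ ⊤) {S : Finset (ι → G)} (hS : closure (S : Set (ι → G)) = ⊤) :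
    Fintype.card ι ≤ S.card := by
  obtain ⟨p, hp, f, hf⟩ := exists_surjective_multiplicative_zmod_of_commutator_ne_top hG
  have := Fact.mk hp
  have hF : Surjective
      ((MulEquiv.piMultiplicative fun _ : ι => ZMod p).symm.toMonoidHom.comp (f.compLeft ι)) :=
    (MulEquiv.piMultiplicative fun _ : ι => ZMod p).symm.surjective.comp hf.comp_left
  simpa [Module.finrank_fintype_fun_eq_card] using
    finrank_le_card_of_closure_eq_top (K := ZMod p) _ hF hS

theorem exists_pow_eq_self_and_pow_eq_one {G ι : Type*} [Group G] [Fintype ι] {a : ι → G}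
    (hcop : Pairwise (Nat.Coprime on (orderOf ∘ a))) (i : ι) :
    ∃ N : ℕ, a i ^ N = a i ∧ ∀ j ≠ i, a j ^ N = 1 := by
  classical
  have hdvd : ∀ j ≠ i, orderOf (a j) ∣ ∏ l ∈ Finset.univ.erase i, orderOf (a l) := fun j hj =>
    Finset.dvd_prod_of_mem _ (Finset.mem_erase.mpr ⟨hj, Finset.mem_univ j⟩)
  have hco : (orderOf (a i)).Coprime (∏ l ∈ Finset.univ.erase i, orderOf (a l)) :=
    Nat.Coprime.prod_right fun j hj => hcop (Finset.ne_of_mem_erase hj).symm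
  obtain ⟨N, hN1, hN0⟩ := Nat.chineseRemainder hco 1 0
  refine ⟨N, by simpa using pow_eq_pow_iff_modEq.mpr hN1, fun j hj => ?_⟩
  exact orderOf_dvd_iff_pow_eq_one.mp ((hdvd j hj).trans (Nat.modEq_zero_iff_dvd.mp hN0))

theorem extend_pow_eq_mulSingle {G ι J : Type*} [Group G] [DecidableEq J] {a : ι → G}
    {e : ι → J} (he : Injective e) {i : ι} {N : ℕ} (hi : a i ^ N = a i)
    (hj : ∀ j ≠ i, a j ^ N = 1) : extend e a 1 ^ N = Pi.mulSingle (e i) (a i) := by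
  funext x
  rw [Pi.pow_apply]
  by_cases hx : ∃ j, e j = x
  · obtain ⟨j, rfl⟩ := hx
    rw [he.extend_apply]
    obtain rfl | hji := eq_or_ne j i
    · rw [hi, Pi.mulSingle_eq_same]
    · rw [hj j hji, Pi.mulSingle_eq_of_ne (he.ne hji)]
  · rw [extend_apply' _ _ _ hx, Pi.one_apply, one_pow, Pi.mulSingle_eq_of_ne]
    rintro rfl
    exact hx ⟨i, rfl⟩

theorem closure_range_extend_add_eq_top {G ι J : Type*} [Group G] [Fintype ι] [AddGroup J]
    [Finite J] {a : ι → G} (hgen : closure (Set.range a) = ⊤)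
    (hcop : Pairwise (Nat.Coprime on (orderOf ∘ a))) {e : ι → J}
    (he : Injective e) :
    closure (Set.range fun j : J => extend (fun i => j + e i) a 1) = ⊤ := by
  classical
  set H := closure (Set.range fun j : J => extend (fun i => j + e i) a 1)
  have hsingle : ∀ x i, Pi.mulSingle x (a i) ∈ H := by
    intro x i
    obtain ⟨N, hi, hj⟩ := exists_pow_eq_self_and_pow_eq_one hcop i
    have hpow := extend_pow_eq_mulSingle ((add_right_injective (x - e i)).comp he) hi hj
    rw [comp_apply, sub_add_cancel] at hpow
    exact hpow ▸ pow_mem (subset_closure (Set.mem_range_self (x - e i))) N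
  refine eq_top_iff.mpr fun y _ => pi_mem_of_mulSingle_mem y fun x => ?_
  have hle : closure (Set.range a) ≤ H.comap (MonoidHom.mulSingle _ x) :=
    (closure_le _).mpr (Set.range_subset_iff.mpr (hsingle x))
  exact hle (hgen ▸ mem_top (y x))

theorem stmt6 {G : Type*} [Group G] [Fintype G]
    (hperf : commutator G ≠ ⊤) (k : ℕ) (a : Fin k → G)
    (hgen : Subgroup.closure (Set.range a) = ⊤)
    (hcop : ∀ i j : Fin k, i ≠ j → Nat.Coprime (orderOf (a i)) (orderOf (a j))) :
    ∀ n : ℕ, k ≤ n → rk (Fin n → G) = n := by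
  intro n hkn
  -- `Fin n` is an additive group only for `n ≠ 0`; `n = 0` would force `k = 0` and `G` trivial.
  have : NeZero n := ⟨by
    rintro rfl
    obtain rfl := Nat.le_zero.mp hkn
    exact hperf <| top_unique <| hgen ▸
      (closure_le _).mpr (Set.range_subset_iff.mpr fun i => i.elim0)⟩
  have hshifts := closure_range_extend_add_eq_top hgen (fun i j => hcop i j)
    (Fin.castLE_injective hkn)
  simpa using rk_eq_card_of_closure_range_eq_top _ hshifts
    fun S => card_le_card_of_closure_eq_top_pi hperf
end

section
/- Let n ≥ 4 be even and k ≥ 1. Then rank((D_n)^k) = 2k, where D_n is the dihedral group of order 2n. -/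
open Subgroup

/-!
The rotation `r 1` and the reflection `sr 0` generate `D_n`, so placing them in each coordinate
gives `2k` generators of `D_nᵏ`. Conversely, for even `n` the parity of the rotation index
together with the reflection flag is a surjective homomorphism `D_n → (ℤ/2)²`, so `D_nᵏ`
surjects onto the `2k`-dimensional `𝔽₂`-vector space `(ℤ/2)^{2k}`, and a generating set of
`D_nᵏ` maps onto a spanning set of it.
-/

section Rank

variable {G H : Type*} [Group G] [Group H]

theorem rk_le_card {S : Finset G} (hS : closure (S : Set G) = ⊤) : rk G ≤ S.card :=
  Nat.sInf_le ⟨S, rfl, hS⟩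

theorem exists_card_eq_rk [Group.FG G] :
    ∃ S : Finset G, S.card = rk G ∧ closure (S : Set G) = ⊤ :=
  Nat.sInf_mem (Group.fg_iff'.mp ‹_›)

theorem rk_le_rk_of_surjective [Group.FG G] (f : G →* H) (hf : Function.Surjective f) :
    rk H ≤ rk G := by
  classical
  obtain ⟨S, hcard, hS⟩ := exists_card_eq_rk (G := G)
  have hgen : closure ((S.image f : Finset H) : Set H) = ⊤ := by
    rw [Finset.coe_image, ← MonoidHom.map_closure, hS, ← MonoidHom.range_eq_map,
      MonoidHom.range_eq_top_of_surjective f hf]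
  calc rk H ≤ (S.image f).card := rk_le_card hgen
    _ ≤ S.card := Finset.card_image_le
    _ = rk G := hcard

theorem rk_pi_le {ι : Type*} [Fintype ι] [Group.FG G] :
    rk (ι → G) ≤ Fintype.card ι * rk G := by
  classical
  obtain ⟨S, hcard, hS⟩ := exists_card_eq_rk (G := G)
  let T : Finset (ι → G) := Finset.univ.biUnion fun i => S.image (Pi.mulSingle i)
  have hgen : closure (T : Set (ι → G)) = ⊤ := by
    refine eq_top_iff.mpr fun g _ => pi_mem_of_mulSingle_mem g fun i => ?_
    have hgi : Pi.mulSingle i (g i) ∈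
        (closure (S : Set G)).map (MonoidHom.mulSingle (fun _ : ι => G) i) :=
      mem_map_of_mem _ (hS ▸ mem_top (g i))
    rw [MonoidHom.map_closure] at hgi
    refine closure_mono ?_ hgi
    rintro _ ⟨x, hx, rfl⟩
    simp only [T, Finset.coe_biUnion, Finset.coe_image, Set.mem_iUnion]
    exact ⟨i, Finset.mem_coe.mpr (Finset.mem_univ i), x, hx, rfl⟩
  calc rk (ι → G) ≤ T.card := rk_le_card hgen
    _ ≤ ∑ _i : ι, S.card := Finset.card_biUnion_le.trans
        (Finset.sum_le_sum fun _ _ => Finset.card_image_le)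
    _ = Fintype.card ι * rk G := by rw [Finset.sum_const, Finset.card_univ, smul_eq_mul, hcard]

end Rank

section Finrank

variable {R V : Type*} [Ring R] [StrongRankCondition R] [AddCommGroup V] [Module R V]

theorem finrank_le_card_of_addClosure_eq_top {T : Finset V}
    (hT : AddSubgroup.closure (T : Set V) = ⊤) : Module.finrank R V ≤ T.card := by
  have hspan : Submodule.span R (T : Set V) = ⊤ := by
    refine Submodule.toAddSubgroup_injective (eq_top_iff.mpr ?_)
    rw [← hT, AddSubgroup.closure_le]
    exact Submodule.subset_span
  calc Module.finrank R V = Set.finrank R (T : Set V) := by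
        rw [Set.finrank, hspan, finrank_top]
    _ ≤ T.card := finrank_span_finset_le_card T

theorem finrank_le_rk_multiplicative [Group.FG (Multiplicative V)] :
    Module.finrank R V ≤ rk (Multiplicative V) := by
  classical
  obtain ⟨S, hcard, hS⟩ := exists_card_eq_rk (G := Multiplicative V)
  have hT : AddSubgroup.closure ((S.image Multiplicative.toAdd : Finset V) : Set V) = ⊤ := by
    rw [Finset.coe_image, Equiv.image_eq_preimage_symm]
    change AddSubgroup.closure (Multiplicative.ofAdd ⁻¹' (S : Set (Multiplicative V))) = ⊤
    rw [← toAddSubgroup'_closure, hS]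
    rfl
  exact hcard ▸ (finrank_le_card_of_addClosure_eq_top hT).trans Finset.card_image_le

end Finrank

namespace DihedralGroup

variable {n : ℕ}

theorem closure_r_one_sr_zero (n : ℕ) :
    closure ({r 1, sr 0} : Set (DihedralGroup n)) = ⊤ := by
  have hr : ∀ i : ZMod n, r i ∈ closure ({r 1, sr 0} : Set (DihedralGroup n)) := fun i => by
    rw [← ZMod.intCast_zmod_cast i, ← r_one_zpow]
    exact zpow_mem (subset_closure (by simp)) _
  refine eq_top_iff.mpr fun x _ => ?_
  rcases x with i | i
  · exact hr i
  · rw [← zero_add i, ← sr_mul_r]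
    exact mul_mem (subset_closure (by simp)) (hr i)

instance : Group.FG (DihedralGroup n) :=
  Group.fg_def.mpr ⟨{r 1, sr 0}, by simpa using closure_r_one_sr_zero n⟩

theorem rk_le_two : rk (DihedralGroup n) ≤ 2 := by
  classical
  calc rk (DihedralGroup n) ≤ ({r 1, sr 0} : Finset (DihedralGroup n)).card :=
        rk_le_card (by simpa using closure_r_one_sr_zero n)
    _ ≤ 2 := Finset.card_le_two

/-- The abelianization of `D_n` for even `n`: its kernel is the commutator subgroup `⟨r 2⟩`. -/
def toKleinFour (h : 2 ∣ n) : DihedralGroup n →* Multiplicative (ZMod 2 × ZMod 2) where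
  toFun
    | r i => Multiplicative.ofAdd (ZMod.castHom h (ZMod 2) i, 0)
    | sr i => Multiplicative.ofAdd (ZMod.castHom h (ZMod 2) i, 1)
  map_one' := by
    show Multiplicative.ofAdd (ZMod.castHom h (ZMod 2) 0, 0) = 1
    rw [map_zero]
    rfl
  map_mul' x y := by
    have hsub : ∀ i j : ZMod n,
        ZMod.castHom h (ZMod 2) (j - i) = ZMod.castHom h (ZMod 2) i + ZMod.castHom h (ZMod 2) j :=
      fun i j => by rw [map_sub, CharTwo.sub_eq_add, add_comm]
    rcases x with i | i <;> rcases y with j | j <;>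
      simp only [r_mul_r, r_mul_sr, sr_mul_r, sr_mul_sr, map_add, hsub, ← ofAdd_add,
        Prod.mk_add_mk, add_zero, zero_add, CharTwo.add_self_eq_zero]

theorem toKleinFour_surjective (h : 2 ∣ n) : Function.Surjective (toKleinFour h) := by
  rintro ⟨a, b⟩
  have hcast : ZMod.castHom h (ZMod 2) (a.val : ZMod n) = a := by
    rw [map_natCast, ZMod.natCast_zmod_val]
  fin_cases b
  · exact ⟨r a.val, congrArg (fun c => Multiplicative.ofAdd (c, (0 : ZMod 2))) hcast⟩
  · exact ⟨sr a.val, congrArg (fun c => Multiplicative.ofAdd (c, (1 : ZMod 2))) hcast⟩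

end DihedralGroup

theorem stmt10_general (n k : ℕ) (heven : Even n) :
    rk (Fin k → DihedralGroup n) = 2 * k := by
  let f : (Fin k → DihedralGroup n) →* Multiplicative (Fin k → ZMod 2 × ZMod 2) :=
    (MulEquiv.piMultiplicative _).symm.toMonoidHom.comp
      ((DihedralGroup.toKleinFour heven.two_dvd).compLeft (Fin k))
  have hf : Function.Surjective f := (MulEquiv.piMultiplicative _).symm.surjective.comp
    (DihedralGroup.toKleinFour_surjective heven.two_dvd).comp_left
  refine le_antisymm ?_ ?_
  · calc rk (Fin k → DihedralGroup n) ≤ Fintype.card (Fin k) * rk (DihedralGroup n) := rk_pi_le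
      _ ≤ k * 2 := by rw [Fintype.card_fin]; exact Nat.mul_le_mul_left k DihedralGroup.rk_le_two
      _ = 2 * k := mul_comm k 2
  · calc 2 * k = Module.finrank (ZMod 2) (Fin k → ZMod 2 × ZMod 2) := by
          simp [Module.finrank_pi_fintype, Module.finrank_prod, mul_comm]
      _ ≤ rk (Multiplicative (Fin k → ZMod 2 × ZMod 2)) := finrank_le_rk_multiplicative
      _ ≤ rk (Fin k → DihedralGroup n) := rk_le_rk_of_surjective f hf

theorem stmt10 (n k : ℕ) (hn : 4 ≤ n) (heven : Even n) (hk : 1 ≤ k) :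
    rk (Fin k → DihedralGroup n) = 2 * k :=
  stmt10_general n k heven
end

section
/- The alternating group A₄ is generated by α = (1 2)(3 4) and β = (1 2 3), and for every n ≥ 2, rank((A₄)^n) = n. -/
open Subgroup

/-!
Seven distinct elements of `⟨α, β⟩` are more than half of `|A₄| = 12`, so `α` and `β` generate.

If `a, b` generate `G` and have coprime orders, then the `n ≥ 2` elements `g i = aᵢ bᵢ₊₁`
(indices mod `n`) generate `Gⁿ`: `aᵢ` and `bᵢ₊₁` commute and have coprime orders, so both lie in
`⟨g i⟩`. Conversely `A₄ / V ≅ ℤ/3`, so a generating set of `A₄ⁿ` maps onto a spanning set of the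
`𝔽₃`-vector space `𝔽₃ⁿ` and has at least `n` elements.
-/

open Function

theorem Subgroup.eq_top_of_card_lt_two_mul {G : Type*} [Group G] [Finite G] (H : Subgroup G)
    (h : Nat.card G < 2 * Nat.card H) : H = ⊤ := by
  by_contra hne
  have := H.one_lt_index_of_ne_top hne
  have := H.card_mul_index
  nlinarith

theorem Subgroup.card_le_card_of_coe_subset {G : Type*} [Group G] [Finite G] {H : Subgroup G}
    {s : Finset G} (hs : (s : Set G) ⊆ H) : s.card ≤ Nat.card H := by
  simpa [← Nat.card_coe_set_eq] using Set.ncard_le_ncard hs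

theorem Commute.mem_zpowers_mul_of_coprime {G : Type*} [Group G] {x y : G} (h : Commute x y)
    (hco : (orderOf x).Coprime (orderOf y)) : x ∈ zpowers (x * y) := by
  obtain ⟨k, hkx, hky⟩ := Nat.chineseRemainder hco 1 0
  have hx : x ^ k = x := by simpa using pow_eq_pow_iff_modEq.2 hkx
  have hy : y ^ k = 1 := orderOf_dvd_iff_pow_eq_one.1 (Nat.modEq_zero_iff_dvd.1 hky)
  exact ⟨k, by simp [h.mul_pow, hx, hy]⟩

theorem Pi.closure_range_mulSingle_mul_mulSingle_finRotate {G : Type*} [Group G] {a b : G}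
    (hab : Subgroup.closure {a, b} = ⊤) (hco : (orderOf a).Coprime (orderOf b)) {n : ℕ}
    (hn : 2 ≤ n) :
    Subgroup.closure
      (Set.range fun i : Fin n => (mulSingle i a * mulSingle (finRotate n i) b : Fin n → G))
      = ⊤ := by
  set H := Subgroup.closure
    (Set.range fun i : Fin n => (mulSingle i a * mulSingle (finRotate n i) b : Fin n → G))
  have hgen (i : Fin n) : (mulSingle i a * mulSingle (finRotate n i) b : Fin n → G) ∈ H :=
    subset_closure ⟨i, rfl⟩
  have ha (i : Fin n) : mulSingle i a ∈ H := by
    have hmoved : i ∈ (finRotate n).support := by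
      rw [support_finRotate_of_le hn]; exact Finset.mem_univ i
    have hne : i ≠ finRotate n i := fun h => Equiv.Perm.mem_support.1 hmoved h.symm
    have horder (j : Fin n) (x : G) : orderOf (mulSingle j x : Fin n → G) = orderOf x :=
      orderOf_injective (MonoidHom.mulSingle (fun _ => G) j)
        (mulSingle_injective (M := fun _ => G) j) x
    have hcomm := Pi.mulSingle_commute (f := fun _ => G) hne a b
    refine zpowers_le.2 (hgen i) (hcomm.mem_zpowers_mul_of_coprime ?_)
    rwa [horder, horder]
  have hb (i : Fin n) : mulSingle (finRotate n i) b ∈ H := by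
    simpa using mul_mem (inv_mem (ha i)) (hgen i)
  have hsingle (i : Fin n) (x : G) : mulSingle i x ∈ H := by
    have hle : closure {a, b} ≤ H.comap (MonoidHom.mulSingle _ i) := by
      rw [closure_le, Set.insert_subset_iff, Set.singleton_subset_iff]
      refine ⟨ha i, ?_⟩
      have := hb ((finRotate n).symm i)
      rwa [Equiv.apply_symm_apply] at this
    exact hle (hab ▸ mem_top x)
  exact eq_top_iff.2 fun x _ => pi_mem_of_mulSingle_mem x fun i => hsingle i (x i)

theorem Module.finrank_le_card_of_addClosure_eq_top {K V : Type*} [DivisionRing K]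
    [AddCommGroup V] [Module K V] {S : Finset V} (hS : AddSubgroup.closure (S : Set V) = ⊤) :
    Module.finrank K V ≤ S.card := by
  have hle : AddSubgroup.closure (S : Set V) ≤ (Submodule.span K (S : Set V)).toAddSubgroup :=
    (AddSubgroup.closure_le _).2 Submodule.subset_span
  have hspan : Submodule.span K (S : Set V) = ⊤ :=
    eq_top_iff.2 fun v _ => hle (hS ▸ AddSubgroup.mem_top v)
  have := finrank_span_finset_le_card (R := K) S
  rwa [Set.finrank, hspan, finrank_top] at this

theorem Module.finrank_le_card_of_surjective_of_closure_eq_top {G K V : Type*} [Group G]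
    [DivisionRing K] [AddCommGroup V] [Module K V] {f : G →* Multiplicative V} (hf : Surjective f)
    {S : Finset G} (hS : closure (S : Set G) = ⊤) : Module.finrank K V ≤ S.card := by
  classical
  have hmap : closure (f '' S) = ⊤ := by
    rw [← MonoidHom.map_closure, hS, map_top_of_surjective f hf]
  have hadd : AddSubgroup.closure (S.image fun g => (f g).toAdd : Set V) = ⊤ := by
    have := congrArg toAddSubgroup' hmap
    rw [toAddSubgroup'_closure] at this
    convert this using 2
    · ext v; simp [← Multiplicative.toAdd_symm_eq, Equiv.eq_symm_apply]
    · simp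
  exact (finrank_le_card_of_addClosure_eq_top hadd).trans Finset.card_image_le

theorem Pi.card_le_card_of_closure_eq_top {G K ι : Type*} [Group G] [DivisionRing K] [Fintype ι]
    {χ : G →* Multiplicative K} (hχ : Surjective χ) {S : Finset (ι → G)}
    (hS : closure (S : Set (ι → G)) = ⊤) : Fintype.card ι ≤ S.card := by
  have hF : Surjective ((MulEquiv.funMultiplicative ι K).symm.toMonoidHom.comp (χ.compLeft ι)) :=
    (MulEquiv.surjective (MulEquiv.funMultiplicative ι K).symm).comp hχ.comp_left
  simpa using Module.finrank_le_card_of_surjective_of_closure_eq_top (K := K) hF hS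

theorem rk_le_card_of_closure_range_eq_top {G ι : Type*} [Group G] [Fintype ι] {g : ι → G}
    (h : closure (Set.range g) = ⊤) : rk G ≤ Fintype.card ι := by
  classical
  have hS : closure ((Finset.univ.image g : Finset G) : Set G) = ⊤ := by simpa using h
  exact (Nat.sInf_le ⟨_, rfl, hS⟩ : rk G ≤ _).trans Finset.card_image_le

theorem le_rk {G : Type*} [Group G] [Finite G] {n : ℕ}
    (h : ∀ S : Finset G, closure (S : Set G) = ⊤ → n ≤ S.card) : n ≤ rk G := by
  have := Fintype.ofFinite G
  exact le_csInf ⟨_, Finset.univ, rfl, by simp⟩ fun m ⟨S, hm, hS⟩ => hm ▸ h S hS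

namespace alternatingGroup

theorem card_quotient_kleinFour {α : Type*} [DecidableEq α] [Fintype α] (hα4 : Nat.card α = 4) :
    Nat.card (alternatingGroup α ⧸ kleinFour α) = 3 := by
  have := (kleinFour α).card_eq_card_quotient_mul_card_subgroup
  rw [card_of_card_eq_four hα4, kleinFour_card_of_card_eq_four hα4] at this
  omega

theorem exists_surjective_zmod_three {α : Type*} [DecidableEq α] [Fintype α]
    (hα4 : Nat.card α = 4) :
    ∃ χ : alternatingGroup α →* Multiplicative (ZMod 3), Surjective χ := by
  have := normal_kleinFour hα4
  have : Fact (Nat.Prime 3) := ⟨Nat.prime_three⟩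
  let e := mulEquivOfPrimeCardEq (card_quotient_kleinFour hα4)
    ((Nat.card_congr Multiplicative.toAdd).trans (Nat.card_zmod 3))
  exact ⟨e.toMonoidHom.comp (QuotientGroup.mk' _),
    e.surjective.comp (QuotientGroup.mk'_surjective _)⟩

def doubleTransposition : alternatingGroup (Fin 4) :=
  ⟨Equiv.swap 0 1 * Equiv.swap 2 3, by rw [Equiv.Perm.mem_alternatingGroup]; decide⟩

def threeCycle : alternatingGroup (Fin 4) :=
  ⟨Equiv.swap 0 1 * Equiv.swap 1 2, by rw [Equiv.Perm.mem_alternatingGroup]; decide⟩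

theorem orderOf_doubleTransposition : orderOf doubleTransposition = 2 :=
  orderOf_eq_prime (by decide) (by decide)

theorem orderOf_threeCycle : orderOf threeCycle = 3 :=
  orderOf_eq_prime (p := 3) (hp := ⟨Nat.prime_three⟩) (by decide) (by decide)

theorem closure_doubleTransposition_threeCycle :
    closure {doubleTransposition, threeCycle} = ⊤ := by
  set a := doubleTransposition
  set b := threeCycle
  set H := closure {a, b}
  have ha : a ∈ H := subset_closure (by simp)
  have hb : b ∈ H := subset_closure (by simp)
  have hsub : (({1, a, b, b ^ 2, a * b, b * a, a * b ^ 2} : Finset _) : Set _) ⊆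
      (H : Set (alternatingGroup (Fin 4))) := by
    simp only [Finset.coe_insert, Finset.coe_singleton, Set.insert_subset_iff,
      Set.singleton_subset_iff, SetLike.mem_coe]
    exact ⟨one_mem H, ha, hb, pow_mem hb 2, mul_mem ha hb, mul_mem hb ha,
      mul_mem ha (pow_mem hb 2)⟩
  refine H.eq_top_of_card_lt_two_mul ?_
  calc Nat.card (alternatingGroup (Fin 4)) = 12 := card_of_card_eq_four (by simp)
    _ < 2 * ({1, a, b, b ^ 2, a * b, b * a, a * b ^ 2} : Finset _).card := by decide
    _ ≤ 2 * Nat.card H := by gcongr; exact Subgroup.card_le_card_of_coe_subset hsub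

end alternatingGroup

theorem stmt11 :
    Subgroup.closure
        {(⟨Equiv.swap 0 1 * Equiv.swap 2 3,
            by rw [Equiv.Perm.mem_alternatingGroup]; decide⟩ : alternatingGroup (Fin 4)),
          ⟨Equiv.swap 0 1 * Equiv.swap 1 2,
            by rw [Equiv.Perm.mem_alternatingGroup]; decide⟩} = ⊤ ∧
      ∀ n : ℕ, 2 ≤ n → rk (Fin n → alternatingGroup (Fin 4)) = n := by
  refine ⟨alternatingGroup.closure_doubleTransposition_threeCycle, fun n hn => ?_⟩
  have hco : (orderOf alternatingGroup.doubleTransposition).Coprime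
      (orderOf alternatingGroup.threeCycle) := by
    rw [alternatingGroup.orderOf_doubleTransposition, alternatingGroup.orderOf_threeCycle]
    norm_num
  have hgen := Pi.closure_range_mulSingle_mul_mulSingle_finRotate
    alternatingGroup.closure_doubleTransposition_threeCycle hco hn
  obtain ⟨χ, hχ⟩ := alternatingGroup.exists_surjective_zmod_three (α := Fin 4) (by simp)
  refine le_antisymm ((rk_le_card_of_closure_range_eq_top hgen).trans_eq (Fintype.card_fin n))
    (le_rk fun S hS => ?_)
  simpa using Pi.card_le_card_of_closure_eq_top hχ hS
end

section
/- Let G be a finite group, N a nontrivial proper normal subgroup of G. Then D^s(G) ≤ 2·D^s(G/N)·D^s(N) + D^s(G/N) + D^s(N) ≤ 4·D^s(G/N)·D^s(N), where D^s denotes the maximum symmetric diameter over all generating sets. -/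
open Subgroup

/-!
Fix generators `X` of `G` and put `a = D^s(G/N)`, `b = D^s(N)`. Lifting a shortest word of the
quotient, every coset `gN` has a representative `σ g` of `X`-length at most `a`. By Schreier's
argument `N` is generated by the elements `(σ (x g))⁻¹ x σ g` with `x ∈ X ∪ X⁻¹`, whose `X`-length is
at most `2a + 1`; so `g = σ g · ((σ g)⁻¹ g)` has `X`-length at most `a + b (2a + 1)`. The second
inequality is `a + b ≤ 2ab`, which holds because both diameters are positive for nontrivial groups.
-/

section WordLength

variable {G : Type*} [Group G] {X : Set G}

theorem sLen_prod_le {l : List G} (hl : ∀ x ∈ l, x ∈ X ∨ x⁻¹ ∈ X) : sLen X l.prod ≤ l.length :=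
  Nat.sInf_le ⟨l, hl, rfl, rfl⟩

theorem exists_word_length_eq_sLen (hX : closure X = ⊤) (g : G) :
    ∃ l : List G, (∀ x ∈ l, x ∈ X ∨ x⁻¹ ∈ X) ∧ l.length = sLen X g ∧ l.prod = g := by
  have hg : g ∈ Submonoid.closure (X ∪ X⁻¹) := by
    rw [← closure_toSubmonoid, hX]; exact mem_top g
  obtain ⟨l, hl, hlg⟩ := Submonoid.exists_list_of_mem_closure hg
  have hne : {n | ∃ l : List G, (∀ x ∈ l, x ∈ X ∨ x⁻¹ ∈ X) ∧ l.length = n ∧ l.prod = g}.Nonempty :=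
    ⟨l.length, l, hl, rfl, hlg⟩
  exact Nat.sInf_mem hne

theorem sLen_one : sLen X (1 : G) = 0 :=
  Nat.le_zero.1 (sLen_prod_le (l := []) (by simp))

theorem sLen_le_one {x : G} (hx : x ∈ X ∨ x⁻¹ ∈ X) : sLen X x ≤ 1 := by
  simpa using sLen_prod_le (X := X) (l := [x]) (by simpa using hx)

theorem sLen_mul_le (hX : closure X = ⊤) (g h : G) : sLen X (g * h) ≤ sLen X g + sLen X h := by
  obtain ⟨l, hl, hlen, rfl⟩ := exists_word_length_eq_sLen hX g
  obtain ⟨m, hm, hmlen, rfl⟩ := exists_word_length_eq_sLen hX h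
  rw [← hlen, ← hmlen, ← List.length_append, ← List.prod_append]
  exact sLen_prod_le fun x hx => (List.mem_append.1 hx).elim (hl x) (hm x)

theorem sLen_inv_le (hX : closure X = ⊤) (g : G) : sLen X g⁻¹ ≤ sLen X g := by
  obtain ⟨l, hl, hlen, rfl⟩ := exists_word_length_eq_sLen hX g
  rw [List.prod_inv_reverse]
  refine (sLen_prod_le fun x hx => ?_).trans (by simp [hlen])
  obtain ⟨y, hy, rfl⟩ := List.mem_map.1 (List.mem_reverse.1 hx)
  simpa [or_comm] using hl y hy

theorem sLen_inv (hX : closure X = ⊤) (g : G) : sLen X g⁻¹ = sLen X g :=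
  le_antisymm (sLen_inv_le hX g) (by simpa using sLen_inv_le hX g⁻¹)

theorem sLen_pos (hX : closure X = ⊤) {g : G} (hg : g ≠ 1) : 0 < sLen X g := by
  obtain ⟨l, -, hlen, rfl⟩ := exists_word_length_eq_sLen hX g
  rw [← hlen, List.length_pos_iff]
  rintro rfl
  exact hg List.prod_nil

theorem sLen_list_prod_le (hX : closure X = ⊤) {l : List G} {k : ℕ}
    (hl : ∀ x ∈ l, sLen X x ≤ k) : sLen X l.prod ≤ l.length * k := by
  induction l with
  | nil => simp [sLen_one]
  | cons x l ih =>
    rw [List.prod_cons, List.length_cons, Nat.succ_mul, add_comm]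
    grw [sLen_mul_le hX, hl x List.mem_cons_self, ih fun y hy => hl y (List.mem_cons_of_mem x hy)]

theorem sLen_map_le {H : Type*} [Group H] {Y : Set H} (hX : closure X = ⊤) (hY : closure Y = ⊤)
    (f : H →* G) {k : ℕ} (hk : ∀ y ∈ Y, sLen X (f y) ≤ k) (h : H) :
    sLen X (f h) ≤ sLen Y h * k := by
  obtain ⟨l, hl, hlen, rfl⟩ := exists_word_length_eq_sLen hY h
  rw [← hlen, map_list_prod, ← List.length_map f]
  refine sLen_list_prod_le hX fun x hx => ?_
  obtain ⟨y, hy, rfl⟩ := List.mem_map.1 hx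
  rcases hl y hy with hy | hy
  · exact hk y hy
  · simpa [sLen_inv hX] using hk _ hy

theorem exists_sLen_le_of_surjective {Q : Type*} [Group Q] (hX : closure X = ⊤) (f : G →* Q)
    (hf : Function.Surjective f) (q : Q) : ∃ g, f g = q ∧ sLen X g ≤ sLen (f '' X) q := by
  have hfX : closure (f '' X) = ⊤ := by rw [← MonoidHom.map_closure, hX, map_top_of_surjective f hf]
  obtain ⟨l, hl, hlen, rfl⟩ := exists_word_length_eq_sLen hfX q
  rw [← hlen]
  clear hlen
  induction l with
  | nil => exact ⟨1, by simp, by simp [sLen_one]⟩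
  | cons q l ih =>
    obtain ⟨g, hg, hgl⟩ := ih fun x hx => hl x (List.mem_cons_of_mem q hx)
    obtain ⟨x, hx, rfl⟩ : ∃ x, sLen X x ≤ 1 ∧ f x = q := by
      rcases hl q List.mem_cons_self with ⟨x, hx, rfl⟩ | ⟨x, hx, hxq⟩
      · exact ⟨x, sLen_le_one (Or.inl hx), rfl⟩
      · exact ⟨x⁻¹, sLen_le_one (Or.inr (by simpa using hx)), by simp [hxq]⟩
    refine ⟨x * g, by simp [hg], ?_⟩
    grw [sLen_mul_le hX, hx, hgl, List.length_cons, add_comm]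

end WordLength

section Schreier

variable {G : Type*} [Group G] {X : Set G}

theorem le_closure_sLen_le (hX : closure X = ⊤) (N : Subgroup G) {a : ℕ} (σ : G → G)
    (hσN : ∀ g, (σ g)⁻¹ * g ∈ N) (hσ : ∀ g, sLen X (σ g) ≤ a) :
    N ≤ closure {y | y ∈ N ∧ sLen X y ≤ 2 * a + 1} := by
  set K := closure {y | y ∈ N ∧ sLen X y ≤ 2 * a + 1}
  have schreier_mem : ∀ x g, (x ∈ X ∨ x⁻¹ ∈ X) → (σ (x * g))⁻¹ * x * σ g ∈ K := by
    intro x g hx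
    refine subset_closure ⟨?_, ?_⟩
    · simpa [mul_assoc] using N.mul_mem (hσN (x * g)) (N.inv_mem (hσN g))
    · grw [sLen_mul_le hX, sLen_mul_le hX, sLen_inv hX, hσ, hσ, sLen_le_one hx]
      omega
  have hK : ∀ g, (σ g)⁻¹ * g ∈ K := by
    intro g
    induction (hX ▸ mem_top g : g ∈ closure X) using closure_induction_left with
    | one =>
      have hσ1 : σ 1 ∈ K := subset_closure ⟨by simpa using hσN 1, by grw [hσ]; omega⟩
      simpa using K.inv_mem hσ1
    | mul_left x hx g _ ih =>
      simpa [mul_assoc] using K.mul_mem (schreier_mem x g (Or.inl hx)) ih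
    | inv_mul_cancel x hx g _ ih =>
      simpa [mul_assoc] using K.mul_mem (schreier_mem x⁻¹ g (Or.inr (by simpa using hx))) ih
  intro n hn
  have hσn : σ n ∈ K := by
    refine subset_closure ⟨?_, ?_⟩
    · simpa using N.mul_mem hn (N.inv_mem (hσN n))
    · grw [hσ]
      omega
  simpa using K.mul_mem hσn (hK n)

theorem closure_sLen_le_eq_top (hX : closure X = ⊤) (N : Subgroup G) {a : ℕ} (σ : G → G)
    (hσN : ∀ g, (σ g)⁻¹ * g ∈ N) (hσ : ∀ g, sLen X (σ g) ≤ a) :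
    closure {y : N | sLen X (y : G) ≤ 2 * a + 1} = ⊤ := by
  rw [eq_top_iff, ← map_subtype_le_map_subtype, MonoidHom.map_closure, ← MonoidHom.range_eq_map,
    range_subtype]
  convert le_closure_sLen_le hX N σ hσN hσ using 2
  ext y
  simp [and_comm]

end Schreier

section Diameter

variable {G : Type*} [Group G]

theorem sLen_le_diamS [Finite G] (X : Set G) (g : G) : sLen X g ≤ diamS G X :=
  le_csSup (Set.finite_range _).bddAbove ⟨g, rfl⟩

theorem diamS_le_DS [Finite G] {X : Set G} (hX : closure X = ⊤) : diamS G X ≤ DS G := by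
  refine le_csSup (Set.Finite.bddAbove ?_) ⟨X, hX, rfl⟩
  exact (Set.finite_range (diamS G)).subset (by rintro _ ⟨X, -, rfl⟩; exact ⟨X, rfl⟩)

theorem sLen_le_DS [Finite G] {X : Set G} (hX : closure X = ⊤) (g : G) : sLen X g ≤ DS G :=
  (sLen_le_diamS X g).trans (diamS_le_DS hX)

theorem DS_le {n : ℕ} (h : ∀ X : Set G, closure X = ⊤ → ∀ g, sLen X g ≤ n) : DS G ≤ n := by
  refine csSup_le ⟨_, Set.univ, closure_univ, rfl⟩ ?_
  rintro _ ⟨X, hX, rfl⟩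
  refine csSup_le (Set.range_nonempty _) ?_
  rintro _ ⟨g, rfl⟩
  exact h X hX g

theorem one_le_DS [Finite G] [Nontrivial G] : 1 ≤ DS G := by
  obtain ⟨g, hg⟩ := exists_ne (1 : G)
  exact (sLen_pos closure_univ hg).trans_le (sLen_le_DS closure_univ g)

end Diameter

theorem sLen_le_of_normal {G : Type*} [Group G] [Finite G] (N : Subgroup G) [N.Normal]
    {X : Set G} (hX : closure X = ⊤) (g : G) :
    sLen X g ≤ DS (G ⧸ N) + DS N * (2 * DS (G ⧸ N) + 1) := by
  choose τ hτ hτX using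
    exists_sLen_le_of_surjective hX (QuotientGroup.mk' N) (QuotientGroup.mk'_surjective N)
  set σ : G → G := fun g => τ g
  have hσN (g : G) : (σ g)⁻¹ * g ∈ N := QuotientGroup.eq.mp (hτ g)
  have hσ (g : G) : sLen X (σ g) ≤ DS (G ⧸ N) :=
    (hτX g).trans (sLen_le_DS (by rw [← MonoidHom.map_closure, hX,
      map_top_of_surjective _ (QuotientGroup.mk'_surjective N)]) _)
  have hY := closure_sLen_le_eq_top hX N σ hσN hσ
  have hn := sLen_map_le hX hY N.subtype (fun _ hy => hy) ⟨_, hσN g⟩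
  calc sLen X g = sLen X (σ g * ((σ g)⁻¹ * g)) := by rw [mul_inv_cancel_left]
    _ ≤ sLen X (σ g) + sLen X ((σ g)⁻¹ * g) := sLen_mul_le hX _ _
    _ ≤ DS (G ⧸ N) + DS N * (2 * DS (G ⧸ N) + 1) := by
      gcongr
      · exact hσ g
      · exact hn.trans (Nat.mul_le_mul_right _ (sLen_le_DS hY _))

theorem stmt14 {G : Type*} [Group G] [Finite G] (N : Subgroup G) [N.Normal]
    (hbot : N ≠ ⊥) (htop : N ≠ ⊤) :
    DS G ≤ 2 * DS (G ⧸ N) * DS ↥N + DS (G ⧸ N) + DS ↥N ∧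
      2 * DS (G ⧸ N) * DS ↥N + DS (G ⧸ N) + DS ↥N ≤ 4 * DS (G ⧸ N) * DS ↥N := by
  refine ⟨DS_le fun X hX g => (sLen_le_of_normal N hX g).trans_eq (by ring), ?_⟩
  have : Nontrivial (G ⧸ N) := QuotientGroup.nontrivial_iff.2 htop
  have : Nontrivial N := (nontrivial_iff_ne_bot N).2 hbot
  nlinarith [one_le_DS (G := G ⧸ N), one_le_DS (G := N)]
end
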